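/- Triangle inequality for the RDS integral: if f is RDS integrable with respect to α ∈ BV[a,b], then |f| is RDS integrable with respect to α, f is RDS integrable with respect to the variation function Vα(x) = V(α,[a,x]), and |∫_a^b f dα| ≤ ∫_a^b |f| dVα. -/

import Mathlib

open Set Filter Topology
open scoped Classical

noncomputable section

/-- A partition `a = x 0 < x 1 < ... < x n = b` of `[a,b]`. -/
structure RDSPartition (a b : ℝ) where
  n : ℕ
  x : ℕ → ℝ
  mono : ∀ i, i < n → x i < x (i + 1)
  first : x 0 = a
  last : x n = b

/-- Right limit `α(t+)`, with the convention `α(b+) = α(b)` at the right endpoint. -/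
def rLim (b : ℝ) (α : ℝ → ℝ) (t : ℝ) : ℝ :=
  if t < b then Function.rightLim α t else α t

/-- Left limit `α(t-)`, with the convention `α(a-) = α(a)` at the left endpoint. -/
def lLim (a : ℝ) (α : ℝ → ℝ) (t : ℝ) : ℝ :=
  if a < t then Function.leftLim α t else α t

/-- `α`-length of the singleton `{t}` inside `[a,b]`: `α(t+) - α(t-)`. -/
def muPt (a b : ℝ) (α : ℝ → ℝ) (t : ℝ) : ℝ :=
  rLim b α t - lLim a α t

/-- `α`-length of the open interval `(c,d)` inside `[a,b]`: `α(d-) - α(c+)`. -/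
def muIoo (a b : ℝ) (α : ℝ → ℝ) (c d : ℝ) : ℝ :=
  lLim a α d - rLim b α c

/-- `f` is a step function with respect to the partition `P`: it is constant on each
open subinterval `(x (i-1), x i)` of `P`. -/
def IsStepOn (a b : ℝ) (f : ℝ → ℝ) (P : RDSPartition a b) : Prop :=
  ∀ i, i < P.n → ∀ s ∈ Set.Ioo (P.x i) (P.x (i + 1)),
    f s = f ((P.x i + P.x (i + 1)) / 2)

/-- The RDS integral of a step function with respect to the partition `P`:
`Σ_{i=0}^n f(x_i) μ_α({x_i}) + Σ_{i=1}^n c_i μ_α(I_i)`. -/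
def stepInt (a b : ℝ) (α : ℝ → ℝ) (P : RDSPartition a b) (f : ℝ → ℝ) : ℝ :=
  (∑ i ∈ Finset.range (P.n + 1), f (P.x i) * muPt a b α (P.x i)) +
    ∑ i ∈ Finset.range P.n,
      f ((P.x i + P.x (i + 1)) / 2) * muIoo a b α (P.x i) (P.x (i + 1))

/-- Upper envelope: infimum of RDS step integrals of step functions above `f` on `[a,b]`. -/
def upperRDS (a b : ℝ) (α f : ℝ → ℝ) : ℝ :=
  sInf { r | ∃ (u : ℝ → ℝ) (P : RDSPartition a b), IsStepOn a b u P ∧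
    (∀ t ∈ Set.Icc a b, f t ≤ u t) ∧ r = stepInt a b α P u }

/-- Lower envelope: supremum of RDS step integrals of step functions below `f` on `[a,b]`. -/
def lowerRDS (a b : ℝ) (α f : ℝ → ℝ) : ℝ :=
  sSup { r | ∃ (v : ℝ → ℝ) (P : RDSPartition a b), IsStepOn a b v P ∧
    (∀ t ∈ Set.Icc a b, v t ≤ f t) ∧ r = stepInt a b α P v }

/-- RDS integrability with respect to an increasing integrator. -/
def RDSIntegrableInc (a b : ℝ) (α f : ℝ → ℝ) : Prop :=
  lowerRDS a b α f = upperRDS a b α f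

/-- The RDS integral with respect to an increasing integrator. -/
def RDSIntegralInc (a b : ℝ) (α f : ℝ → ℝ) : ℝ := upperRDS a b α f

/-- RDS integrability with respect to a BV integrator: some Jordan decomposition
into increasing functions works. -/
def RDSIntegrable (a b : ℝ) (α f : ℝ → ℝ) : Prop :=
  ∃ αp αm : ℝ → ℝ, MonotoneOn αp (Set.Icc a b) ∧ MonotoneOn αm (Set.Icc a b) ∧
    (∀ t ∈ Set.Icc a b, α t = αp t - αm t) ∧
    RDSIntegrableInc a b αp f ∧ RDSIntegrableInc a b αm f

/-- The RDS integral with respect to a BV integrator. -/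
def RDSIntegral (a b : ℝ) (α f : ℝ → ℝ) : ℝ :=
  if h : RDSIntegrable a b α f then
    RDSIntegralInc a b h.choose f - RDSIntegralInc a b h.choose_spec.choose f
  else 0

/-- `f` is bounded on `[a,b]`. -/
def BddOn (a b : ℝ) (f : ℝ → ℝ) : Prop :=
  ∃ M : ℝ, ∀ t ∈ Set.Icc a b, |f t| ≤ M

end

/-!
Write `α = p - m` with `p`, `m` increasing and let `V` be the variation function. Step integrals
are integrals against Lebesgue–Stieltjes measures, hence independent of the partition and
monotone in the integrand, and the upper and lower envelopes can be approached by step brackets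
`v ≤ f ≤ u` on a single partition. Since `V ∓ α` and `p + m - V` are increasing, the masses
satisfy `|μ_p - μ_m| ≤ μ_V ≤ μ_p + μ_m`: the second bound makes `f` integrable with respect
to `V`, and the first one, applied to a common bracket for `p` and `m`, gives the inequality.

For unbounded `f` the envelopes take junk values: an unbounded set has `sInf = sSup = 0`, and the
lower step integrals become unbounded once a jump function with mass `2⁻ⁿ` at points where
`f ≥ 4ⁿ` is added to both parts of a decomposition. Both sides of the inequality are then `0`.
-/

open MeasureTheory

namespace RDSPartition

variable {a b : ℝ} (P : RDSPartition a b) {i j k : ℕ}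

lemma strictMonoOn_x : StrictMonoOn P.x (Iic P.n) :=
  strictMonoOn_Iic_of_lt_succ fun i hi => P.mono i hi

lemma x_lt_x_iff (hi : i ≤ P.n) (hj : j ≤ P.n) : P.x i < P.x j ↔ i < j :=
  P.strictMonoOn_x.lt_iff_lt hi hj

lemma x_le_x_iff (hi : i ≤ P.n) (hj : j ≤ P.n) : P.x i ≤ P.x j ↔ i ≤ j :=
  P.strictMonoOn_x.le_iff_le hi hj

lemma x_mem (hi : i ≤ P.n) : P.x i ∈ Icc a b := by
  constructor
  · simpa [P.first] using (P.x_le_x_iff (Nat.zero_le _) hi).2 (Nat.zero_le i)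
  · simpa [P.last] using (P.x_le_x_iff hi le_rfl).2 hi

lemma left_le_right (P : RDSPartition a b) : a ≤ b :=
  (P.x_mem (Nat.zero_le _)).1.trans (P.x_mem (Nat.zero_le _)).2

lemma mid_mem_Ioo (hi : i < P.n) :
    (P.x i + P.x (i + 1)) / 2 ∈ Ioo (P.x i) (P.x (i + 1)) := by
  constructor <;> linarith [P.mono i hi]

lemma mid_mem_Icc (hi : i < P.n) : (P.x i + P.x (i + 1)) / 2 ∈ Icc a b :=
  Ioo_subset_Icc_self.trans (Icc_subset_Icc (P.x_mem hi.le).1 (P.x_mem hi).2)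
    (P.mid_mem_Ioo hi)

lemma x_notMem_Ioo (hi : i ≤ P.n) (hk : k < P.n) : P.x i ∉ Ioo (P.x k) (P.x (k + 1)) := by
  rintro ⟨h₁, h₂⟩
  rw [P.x_lt_x_iff hk.le hi] at h₁
  rw [P.x_lt_x_iff hi hk] at h₂
  omega

lemma exists_x_eq_or_mem_Ioo {t : ℝ} (ht : t ∈ Icc a b) :
    (∃ i ≤ P.n, P.x i = t) ∨ ∃ i < P.n, t ∈ Ioo (P.x i) (P.x (i + 1)) := by
  have htn : t ≤ P.x P.n := by rw [P.last]; exact ht.2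
  have hex : ∃ j, t ≤ P.x j := ⟨P.n, htn⟩
  set j := Nat.find hex
  have hjn : j ≤ P.n := Nat.find_min' hex htn
  rcases (Nat.find_spec hex).eq_or_lt with h | h
  · exact Or.inl ⟨j, hjn, h.symm⟩
  · obtain ⟨i, hi⟩ : ∃ i, j = i + 1 := by
      refine Nat.exists_eq_succ_of_ne_zero fun h0 => ?_
      have : t < a := by rw [← P.first]; rwa [← h0]
      exact absurd ht.1 (not_le.2 this)
    have hit : P.x i < t := not_le.1 (Nat.find_min hex (by omega))
    exact Or.inr ⟨i, by omega, hit, hi ▸ h⟩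

noncomputable def ofFinset (s : Finset ℝ) (ha : a ∈ s) (hb : b ∈ s) (hs : ∀ x ∈ s, x ∈ Icc a b) :
    RDSPartition a b where
  n := s.card - 1
  x i := if h : i < s.card then s.orderEmbOfFin rfl ⟨i, h⟩ else b
  mono i hi := by
    rw [dif_pos (by omega), dif_pos (by omega)]
    exact (s.orderEmbOfFin rfl).strictMono (Fin.mk_lt_mk.2 (Nat.lt_succ_self i))
  first := by
    have hpos : 0 < s.card := Finset.card_pos.2 ⟨a, ha⟩
    rw [dif_pos hpos, Finset.orderEmbOfFin_zero rfl hpos]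
    exact le_antisymm (s.min'_le a ha) (hs _ (s.min'_mem _)).1
  last := by
    have hpos : 0 < s.card := Finset.card_pos.2 ⟨a, ha⟩
    rw [dif_pos (by omega), Finset.orderEmbOfFin_last rfl hpos]
    exact le_antisymm (hs _ (s.max'_mem _)).2 (s.le_max' b hb)

lemma exists_ofFinset_x_eq {s : Finset ℝ} (ha : a ∈ s) (hb : b ∈ s)
    (hs : ∀ x ∈ s, x ∈ Icc a b) {y : ℝ} (hy : y ∈ s) :
    ∃ i ≤ (ofFinset s ha hb hs).n, (ofFinset s ha hb hs).x i = y := by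
  obtain ⟨⟨i, hi⟩, rfl⟩ : y ∈ Set.range (s.orderEmbOfFin rfl) := by
    rwa [Finset.range_orderEmbOfFin]
  exact ⟨i, by simp only [ofFinset]; omega, dif_pos hi⟩

noncomputable def endpoints (hab : a ≤ b) : RDSPartition a b :=
  ofFinset {a, b} (by simp) (by simp) (by simp [hab])

end RDSPartition

namespace IsStepOn

variable {a b : ℝ} {P R : RDSPartition a b} {u v : ℝ → ℝ}

lemma const (c : ℝ) (P : RDSPartition a b) : IsStepOn a b (fun _ => c) P :=
  fun _ _ _ _ => rfl

lemma comp (hu : IsStepOn a b u P) (g : ℝ → ℝ) : IsStepOn a b (fun t => g (u t)) P :=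
  fun i hi s hs => by simp only [hu i hi s hs]

lemma map₂ (hu : IsStepOn a b u P) (hv : IsStepOn a b v P) (g : ℝ → ℝ → ℝ) :
    IsStepOn a b (fun t => g (u t) (v t)) P :=
  fun i hi s hs => by simp only [hu i hi s hs, hv i hi s hs]

lemma of_refinement (hu : IsStepOn a b u P) (hPR : ∀ i ≤ P.n, ∃ j ≤ R.n, R.x j = P.x i) :
    IsStepOn a b u R := by
  intro k hk s hs
  have hm := R.mid_mem_Ioo hk
  rcases P.exists_x_eq_or_mem_Ioo (R.mid_mem_Icc hk) with ⟨i, hi, hPm⟩ | ⟨i, hi, hPm⟩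
  · obtain ⟨j, hj, hRj⟩ := hPR i hi
    exact absurd (hRj.trans hPm ▸ hm) (R.x_notMem_Ioo hj hk)
  obtain ⟨j, hj, hRj⟩ := hPR i hi.le
  obtain ⟨j', hj', hRj'⟩ := hPR (i + 1) hi
  have hjk : R.x j ≤ R.x k := by
    have : R.x j < R.x (k + 1) := hRj ▸ hPm.1.trans hm.2
    rw [R.x_lt_x_iff hj hk] at this
    exact (R.x_le_x_iff hj hk.le).2 (by omega)
  have hkj' : R.x (k + 1) ≤ R.x j' := by
    have : R.x k < R.x j' := hRj' ▸ hm.1.trans hPm.2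
    rw [R.x_lt_x_iff hk.le hj'] at this
    exact (R.x_le_x_iff hk hj').2 this
  have hsub : Ioo (R.x k) (R.x (k + 1)) ⊆ Ioo (P.x i) (P.x (i + 1)) :=
    Ioo_subset_Ioo (hRj ▸ hjk) (hRj' ▸ hkj')
  rw [hu i hi s (hsub hs), hu i hi _ (hsub hm)]

lemma exists_abs_le (hu : IsStepOn a b u P) : ∃ M, ∀ t ∈ Icc a b, |u t| ≤ M := by
  refine ⟨(∑ i ∈ Finset.range (P.n + 1), |u (P.x i)|) +
    ∑ i ∈ Finset.range P.n, |u ((P.x i + P.x (i + 1)) / 2)|, fun t ht => ?_⟩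
  have hnodes := Finset.sum_nonneg (s := Finset.range (P.n + 1)) fun i _ => abs_nonneg (u (P.x i))
  have hmids := Finset.sum_nonneg (s := Finset.range P.n)
    fun i _ => abs_nonneg (u ((P.x i + P.x (i + 1)) / 2))
  rcases P.exists_x_eq_or_mem_Ioo ht with ⟨i, hi, rfl⟩ | ⟨i, hi, hti⟩
  · have := Finset.single_le_sum (f := fun i => |u (P.x i)|) (fun i _ => abs_nonneg _)
      (Finset.mem_range.2 (Nat.lt_succ_of_le hi))
    linarith
  · have := Finset.single_le_sum (f := fun i => |u ((P.x i + P.x (i + 1)) / 2)|)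
      (fun i _ => abs_nonneg _) (Finset.mem_range.2 hi)
    rw [hu i hi t hti]
    linarith

end IsStepOn

namespace RDSPartition

variable {a b : ℝ}

lemma exists_common_refinement (P Q : RDSPartition a b) :
    ∃ R : RDSPartition a b, (∀ u, IsStepOn a b u P → IsStepOn a b u R) ∧
      ∀ u, IsStepOn a b u Q → IsStepOn a b u R := by
  set s := (Finset.range (P.n + 1)).image P.x ∪ (Finset.range (Q.n + 1)).image Q.x
  have hP : ∀ i ≤ P.n, P.x i ∈ s := fun i hi =>
    Finset.mem_union_left _ (Finset.mem_image_of_mem _ (Finset.mem_range.2 (by omega)))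
  have hQ : ∀ i ≤ Q.n, Q.x i ∈ s := fun i hi =>
    Finset.mem_union_right _ (Finset.mem_image_of_mem _ (Finset.mem_range.2 (by omega)))
  have hs : ∀ x ∈ s, x ∈ Icc a b := by
    simp only [s, Finset.mem_union, Finset.mem_image, Finset.mem_range]
    rintro x (⟨i, hi, rfl⟩ | ⟨i, hi, rfl⟩)
    exacts [P.x_mem (by omega), Q.x_mem (by omega)]
  have ha : a ∈ s := P.first ▸ hP 0 (Nat.zero_le _)
  have hb : b ∈ s := P.last ▸ hP P.n le_rfl
  exact ⟨ofFinset s ha hb hs,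
    fun u hu => hu.of_refinement fun i hi => exists_ofFinset_x_eq ha hb hs (hP i hi),
    fun u hu => hu.of_refinement fun i hi => exists_ofFinset_x_eq ha hb hs (hQ i hi)⟩

end RDSPartition

section Masses

variable {a b : ℝ} {β γ δ q r : ℝ → ℝ}

lemma rLim_add (hq : Monotone q) (hr : Monotone r) (t : ℝ) :
    rLim b (q + r) t = rLim b q t + rLim b r t := by
  unfold rLim
  split_ifs
  · exact rightLim_eq_of_tendsto ((hq.tendsto_rightLim t).add (hr.tendsto_rightLim t))
  · rfl

lemma lLim_add (hq : Monotone q) (hr : Monotone r) (t : ℝ) :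
    lLim a (q + r) t = lLim a q t + lLim a r t := by
  unfold lLim
  split_ifs
  · exact leftLim_eq_of_tendsto ((hq.tendsto_leftLim t).add (hr.tendsto_leftLim t))
  · rfl

lemma lLim_le_rLim (hq : Monotone q) (t : ℝ) : lLim a q t ≤ rLim b q t := by
  unfold lLim rLim
  split_ifs
  exacts [hq.leftLim_le_rightLim le_rfl, hq.leftLim_le le_rfl, hq.le_rightLim le_rfl, le_rfl]

lemma rLim_le_lLim (hq : Monotone q) {c d : ℝ} (hcd : c < d) : rLim b q c ≤ lLim a q d := by
  unfold lLim rLim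
  split_ifs
  exacts [hq.rightLim_le_leftLim hcd, hq.rightLim_le hcd, hq.le_leftLim hcd, hq hcd.le]

lemma rLim_congr (hγ : Monotone γ) (h : EqOn β γ (Icc a b)) {t : ℝ} (ht : t ∈ Icc a b) :
    rLim b β t = rLim b γ t := by
  unfold rLim
  split_ifs with hb
  · have hev : β =ᶠ[𝓝[>] t] γ := by
      filter_upwards [Ioo_mem_nhdsGT hb] with s hs
      exact h ⟨ht.1.trans hs.1.le, hs.2.le⟩
    rw [rightLim_eq_of_tendsto ((hγ.tendsto_rightLim t).congr' hev.symm)]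
  · exact h ht

lemma lLim_congr (hγ : Monotone γ) (h : EqOn β γ (Icc a b)) {t : ℝ} (ht : t ∈ Icc a b) :
    lLim a β t = lLim a γ t := by
  unfold lLim
  split_ifs with ha
  · have hev : β =ᶠ[𝓝[<] t] γ := by
      filter_upwards [Ioo_mem_nhdsLT ha] with s hs
      exact h ⟨hs.1.le, hs.2.le.trans ht.2⟩
    rw [leftLim_eq_of_tendsto ((hγ.tendsto_leftLim t).congr' hev.symm)]
  · exact h ht

/-- Masses only see the integrator on `[a,b]`; extending it by constants turns a function
monotone on `[a,b]` into a monotone one, to which the one-sided limit theory applies. -/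
noncomputable def extendIcc (hab : a ≤ b) (β : ℝ → ℝ) : ℝ → ℝ :=
  IccExtend hab fun t : Icc a b => β t

lemma MonotoneOn.monotone_extendIcc (hab : a ≤ b) (hβ : MonotoneOn β (Icc a b)) :
    Monotone (extendIcc hab β) :=
  (monotoneOn_iff_monotone.1 hβ).IccExtend hab

lemma extendIcc_add (hab : a ≤ b) (β γ : ℝ → ℝ) :
    extendIcc hab (β + γ) = extendIcc hab β + extendIcc hab γ :=
  rfl

lemma eqOn_extendIcc (hab : a ≤ b) (β : ℝ → ℝ) : EqOn β (extendIcc hab β) (Icc a b) :=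
  fun _ ht => (IccExtend_of_mem hab (fun t : Icc a b => β t) ht).symm

lemma muPt_congr (hγ : Monotone γ) (h : EqOn β γ (Icc a b)) {t : ℝ} (ht : t ∈ Icc a b) :
    muPt a b β t = muPt a b γ t := by
  rw [muPt, muPt, rLim_congr hγ h ht, lLim_congr hγ h ht]

lemma muIoo_congr (hγ : Monotone γ) (h : EqOn β γ (Icc a b)) {c d : ℝ} (hc : c ∈ Icc a b)
    (hd : d ∈ Icc a b) : muIoo a b β c d = muIoo a b γ c d := by
  rw [muIoo, muIoo, rLim_congr hγ h hc, lLim_congr hγ h hd]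

lemma muPt_eq_extendIcc (hab : a ≤ b) (hβ : MonotoneOn β (Icc a b)) {t : ℝ}
    (ht : t ∈ Icc a b) : muPt a b β t = muPt a b (extendIcc hab β) t :=
  muPt_congr (hβ.monotone_extendIcc hab) (eqOn_extendIcc hab β) ht

lemma muIoo_eq_extendIcc (hab : a ≤ b) (hβ : MonotoneOn β (Icc a b)) {c d : ℝ}
    (hc : c ∈ Icc a b) (hd : d ∈ Icc a b) :
    muIoo a b β c d = muIoo a b (extendIcc hab β) c d :=
  muIoo_congr (hβ.monotone_extendIcc hab) (eqOn_extendIcc hab β) hc hd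

lemma muPt_nonneg (hβ : MonotoneOn β (Icc a b)) {t : ℝ} (ht : t ∈ Icc a b) :
    0 ≤ muPt a b β t := by
  have hab : a ≤ b := ht.1.trans ht.2
  rw [muPt_eq_extendIcc hab hβ ht]
  exact sub_nonneg.2 (lLim_le_rLim (hβ.monotone_extendIcc hab) t)

lemma muIoo_nonneg (hβ : MonotoneOn β (Icc a b)) {c d : ℝ} (hc : c ∈ Icc a b)
    (hd : d ∈ Icc a b) (hcd : c < d) : 0 ≤ muIoo a b β c d := by
  have hab : a ≤ b := hc.1.trans hc.2
  rw [muIoo_eq_extendIcc hab hβ hc hd]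
  exact sub_nonneg.2 (rLim_le_lLim (hβ.monotone_extendIcc hab) hcd)

lemma muPt_add (hβ : MonotoneOn β (Icc a b)) (hγ : MonotoneOn γ (Icc a b)) {t : ℝ}
    (ht : t ∈ Icc a b) : muPt a b (β + γ) t = muPt a b β t + muPt a b γ t := by
  have hab : a ≤ b := ht.1.trans ht.2
  have hβ' := hβ.monotone_extendIcc hab
  have hγ' := hγ.monotone_extendIcc hab
  rw [muPt_eq_extendIcc (β := β + γ) hab (hβ.add hγ) ht, extendIcc_add,
    muPt_eq_extendIcc hab hβ ht, muPt_eq_extendIcc hab hγ ht, muPt, muPt, muPt,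
    rLim_add hβ' hγ', lLim_add hβ' hγ']
  ring

lemma muIoo_add (hβ : MonotoneOn β (Icc a b)) (hγ : MonotoneOn γ (Icc a b)) {c d : ℝ}
    (hc : c ∈ Icc a b) (hd : d ∈ Icc a b) :
    muIoo a b (β + γ) c d = muIoo a b β c d + muIoo a b γ c d := by
  have hab : a ≤ b := hc.1.trans hc.2
  have hβ' := hβ.monotone_extendIcc hab
  have hγ' := hγ.monotone_extendIcc hab
  rw [muIoo_eq_extendIcc (β := β + γ) hab (hβ.add hγ) hc hd, extendIcc_add,
    muIoo_eq_extendIcc hab hβ hc hd, muIoo_eq_extendIcc hab hγ hc hd, muIoo, muIoo, muIoo,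
    rLim_add hβ' hγ', lLim_add hβ' hγ']
  ring

end Masses

structure IsMonotoneAdditive (s : Set ℝ) (F : (ℝ → ℝ) → ℝ) : Prop where
  map_add : ∀ β γ, MonotoneOn β s → MonotoneOn γ s → F (β + γ) = F β + F γ
  nonneg : ∀ β, MonotoneOn β s → 0 ≤ F β

namespace IsMonotoneAdditive

variable {s : Set ℝ} {F : (ℝ → ℝ) → ℝ} {β γ δ : ℝ → ℝ}

lemma mono (hF : IsMonotoneAdditive s F) (hβ : MonotoneOn β s) (hγβ : MonotoneOn (γ - β) s) :
    F β ≤ F γ := by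
  have := hF.map_add β (γ - β) hβ hγβ
  rw [add_sub_cancel] at this
  linarith [hF.nonneg _ hγβ]

lemma abs_sub_le (hF : IsMonotoneAdditive s F) (hβ : MonotoneOn β s) (hγ : MonotoneOn γ s)
    (hδ : MonotoneOn δ s) (h₁ : MonotoneOn (δ - (β - γ)) s) (h₂ : MonotoneOn (δ + (β - γ)) s) :
    |F β - F γ| ≤ F δ := by
  have k₁ : F β ≤ F (δ + γ) := hF.mono hβ (by rwa [show δ + γ - β = δ - (β - γ) by abel])
  have k₂ : F γ ≤ F (δ + β) := hF.mono hγ (by rwa [show δ + β - γ = δ + (β - γ) by abel])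
  rw [hF.map_add _ _ hδ hγ] at k₁
  rw [hF.map_add _ _ hδ hβ] at k₂
  exact abs_sub_le_iff.2 ⟨by linarith, by linarith⟩

end IsMonotoneAdditive

section StepIntegral

variable {a b : ℝ} {β γ δ : ℝ → ℝ} {u v w w' : ℝ → ℝ}

lemma isMonotoneAdditive_muPt {t : ℝ} (ht : t ∈ Icc a b) :
    IsMonotoneAdditive (Icc a b) fun β => muPt a b β t :=
  ⟨fun _ _ hβ hγ => muPt_add hβ hγ ht, fun _ hβ => muPt_nonneg hβ ht⟩

lemma isMonotoneAdditive_muIoo {c d : ℝ} (hc : c ∈ Icc a b) (hd : d ∈ Icc a b) (hcd : c < d) :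
    IsMonotoneAdditive (Icc a b) fun β => muIoo a b β c d :=
  ⟨fun _ _ hβ hγ => muIoo_add hβ hγ hc hd, fun _ hβ => muIoo_nonneg hβ hc hd hcd⟩

lemma stepInt_sub (β : ℝ → ℝ) (P : RDSPartition a b) (u v : ℝ → ℝ) :
    stepInt a b β P (fun t => u t - v t) = stepInt a b β P u - stepInt a b β P v := by
  simp only [stepInt, sub_mul, Finset.sum_sub_distrib]
  ring

lemma stepInt_neg (β : ℝ → ℝ) (P : RDSPartition a b) (u : ℝ → ℝ) :
    stepInt a b β P (fun t => -u t) = -stepInt a b β P u := by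
  simp only [stepInt, neg_mul, Finset.sum_neg_distrib]
  ring

lemma stepInt_add_integrator (hβ : MonotoneOn β (Icc a b)) (hγ : MonotoneOn γ (Icc a b))
    (P : RDSPartition a b) (u : ℝ → ℝ) :
    stepInt a b (β + γ) P u = stepInt a b β P u + stepInt a b γ P u := by
  have hx : ∀ i ∈ Finset.range (P.n + 1), u (P.x i) * muPt a b (β + γ) (P.x i) =
      u (P.x i) * muPt a b β (P.x i) + u (P.x i) * muPt a b γ (P.x i) := fun i hi => by
    rw [muPt_add hβ hγ (P.x_mem (Nat.lt_succ_iff.1 (Finset.mem_range.1 hi))), mul_add]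
  have hI : ∀ i ∈ Finset.range P.n,
      u ((P.x i + P.x (i + 1)) / 2) * muIoo a b (β + γ) (P.x i) (P.x (i + 1)) =
      u ((P.x i + P.x (i + 1)) / 2) * muIoo a b β (P.x i) (P.x (i + 1)) +
        u ((P.x i + P.x (i + 1)) / 2) * muIoo a b γ (P.x i) (P.x (i + 1)) := fun i hi => by
    have hi := Finset.mem_range.1 hi
    rw [muIoo_add hβ hγ (P.x_mem hi.le) (P.x_mem hi), mul_add]
  simp only [stepInt, Finset.sum_congr rfl hx, Finset.sum_congr rfl hI, Finset.sum_add_distrib]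
  ring

lemma stepInt_nonneg_and_le (hβ : MonotoneOn β (Icc a b)) (P : RDSPartition a b)
    (hu : ∀ t ∈ Icc a b, 0 ≤ u t) :
    0 ≤ stepInt a b β P u ∧ ∀ i ≤ P.n, u (P.x i) * muPt a b β (P.x i) ≤ stepInt a b β P u := by
  have hx : ∀ i ∈ Finset.range (P.n + 1), 0 ≤ u (P.x i) * muPt a b β (P.x i) := fun i hi =>
    have hx := P.x_mem (Nat.lt_succ_iff.1 (Finset.mem_range.1 hi))
    mul_nonneg (hu _ hx) (muPt_nonneg hβ hx)
  have hI : 0 ≤ ∑ i ∈ Finset.range P.n,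
      u ((P.x i + P.x (i + 1)) / 2) * muIoo a b β (P.x i) (P.x (i + 1)) :=
    Finset.sum_nonneg fun i hi =>
      have hi := Finset.mem_range.1 hi
      mul_nonneg (hu _ (P.mid_mem_Icc hi))
        (muIoo_nonneg hβ (P.x_mem hi.le) (P.x_mem hi) (P.mono i hi))
  exact ⟨add_nonneg (Finset.sum_nonneg hx) hI, fun i hi =>
    le_add_of_le_of_nonneg (Finset.single_le_sum hx (Finset.mem_range.2 (Nat.lt_succ_of_le hi))) hI⟩

lemma stepInt_nonneg (hβ : MonotoneOn β (Icc a b)) (P : RDSPartition a b)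
    (hu : ∀ t ∈ Icc a b, 0 ≤ u t) : 0 ≤ stepInt a b β P u :=
  (stepInt_nonneg_and_le hβ P hu).1

lemma stepInt_mono (hβ : MonotoneOn β (Icc a b)) (P : RDSPartition a b)
    (huv : ∀ t ∈ Icc a b, u t ≤ v t) : stepInt a b β P u ≤ stepInt a b β P v := by
  have := stepInt_nonneg hβ P fun t ht => sub_nonneg.2 (huv t ht)
  rw [stepInt_sub] at this
  linarith

lemma isMonotoneAdditive_stepInt (P : RDSPartition a b) (hu : ∀ t ∈ Icc a b, 0 ≤ u t) :
    IsMonotoneAdditive (Icc a b) fun β => stepInt a b β P u :=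
  ⟨fun _ _ hβ hγ => stepInt_add_integrator hβ hγ P u, fun _ hβ => stepInt_nonneg hβ P hu⟩

lemma stepInt_zero_integrator (P : RDSPartition a b) (u : ℝ → ℝ) :
    stepInt a b 0 P u = 0 := by
  have := stepInt_add_integrator (β := 0) (γ := 0) monotoneOn_const monotoneOn_const P u
  rw [add_zero] at this
  linarith

lemma abs_stepInt_sub_le (hβ : MonotoneOn β (Icc a b)) (hγ : MonotoneOn γ (Icc a b))
    (hδ : MonotoneOn δ (Icc a b)) (h₁ : MonotoneOn (δ - (β - γ)) (Icc a b))
    (h₂ : MonotoneOn (δ + (β - γ)) (Icc a b)) (P : RDSPartition a b)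
    (hw : ∀ t ∈ Icc a b, |w t| ≤ w' t) :
    |stepInt a b β P w - stepInt a b γ P w| ≤ stepInt a b δ P w' := by
  have key : ∀ t ∈ Icc a b, ∀ {x y z : ℝ}, |x - y| ≤ z → |w t * x - w t * y| ≤ w' t * z :=
    fun t ht x y z hxyz => by
      rw [← mul_sub, abs_mul]
      exact mul_le_mul (hw t ht) hxyz (abs_nonneg _) ((abs_nonneg _).trans (hw t ht))
  rw [stepInt, stepInt, stepInt, add_sub_add_comm, ← Finset.sum_sub_distrib,
    ← Finset.sum_sub_distrib]
  refine (abs_add_le _ _).trans (add_le_add ((Finset.abs_sum_le_sum_abs _ _).trans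
    (Finset.sum_le_sum fun i hi => ?_)) ((Finset.abs_sum_le_sum_abs _ _).trans
    (Finset.sum_le_sum fun i hi => ?_)))
  · have hx := P.x_mem (Nat.lt_succ_iff.1 (Finset.mem_range.1 hi))
    exact key _ hx ((isMonotoneAdditive_muPt hx).abs_sub_le hβ hγ hδ h₁ h₂)
  · have hi := Finset.mem_range.1 hi
    exact key _ (P.mid_mem_Icc hi) ((isMonotoneAdditive_muIoo (P.x_mem hi.le) (P.x_mem hi)
      (P.mono i hi)).abs_sub_le hβ hγ hδ h₁ h₂)

lemma stepInt_congr_integrator (hβ : MonotoneOn β (Icc a b)) (h : EqOn β γ (Icc a b))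
    (P : RDSPartition a b) (u : ℝ → ℝ) : stepInt a b β P u = stepInt a b γ P u := by
  have hab := P.left_le_right
  have hext := hβ.monotone_extendIcc hab
  have hγβ : EqOn γ (extendIcc hab β) (Icc a b) := h.symm.trans (eqOn_extendIcc hab β)
  have hx : ∀ i ∈ Finset.range (P.n + 1), muPt a b β (P.x i) = muPt a b γ (P.x i) := fun i hi => by
    have hx := P.x_mem (Nat.lt_succ_iff.1 (Finset.mem_range.1 hi))
    rw [muPt_eq_extendIcc hab hβ hx, muPt_congr hext hγβ hx]
  have hI : ∀ i ∈ Finset.range P.n, muIoo a b β (P.x i) (P.x (i + 1)) =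
      muIoo a b γ (P.x i) (P.x (i + 1)) := fun i hi => by
    have hi := Finset.mem_range.1 hi
    rw [muIoo_eq_extendIcc hab hβ (P.x_mem hi.le) (P.x_mem hi),
      muIoo_congr hext hγβ (P.x_mem hi.le) (P.x_mem hi)]
  simp only [stepInt]
  rw [Finset.sum_congr rfl fun i hi => congr_arg (u (P.x i) * ·) (hx i hi),
    Finset.sum_congr rfl fun i hi => congr_arg (u ((P.x i + P.x (i + 1)) / 2) * ·) (hI i hi)]

end StepIntegral

section Stieltjes

variable {a b : ℝ} {β u : ℝ → ℝ}

lemma rLim_extendIcc (hab : a ≤ b) {t : ℝ} (ht : t ≤ b) :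
    rLim b (extendIcc hab β) t = Function.rightLim (extendIcc hab β) t := by
  rw [rLim]
  split_ifs with htb
  · rfl
  obtain rfl : t = b := le_antisymm ht (not_lt.1 htb)
  refine (rightLim_eq_of_tendsto (tendsto_const_nhds.congr' ?_)).symm
  filter_upwards [self_mem_nhdsWithin] with x hx
  simp only [extendIcc, IccExtend_of_right_le hab _ (le_of_lt hx), IccExtend_right]

lemma lLim_extendIcc (hab : a ≤ b) {t : ℝ} (ht : a ≤ t) :
    lLim a (extendIcc hab β) t = Function.leftLim (extendIcc hab β) t := by
  rw [lLim]
  split_ifs with hat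
  · rfl
  obtain rfl : t = a := le_antisymm (not_lt.1 hat) ht
  refine (leftLim_eq_of_tendsto (tendsto_const_nhds.congr' ?_)).symm
  filter_upwards [self_mem_nhdsWithin] with x hx
  simp only [extendIcc, IccExtend_of_le_left hab _ (le_of_lt hx), IccExtend_left]

noncomputable def stieltjesMeasure (hab : a ≤ b) (hβ : MonotoneOn β (Icc a b)) : Measure ℝ :=
  (hβ.monotone_extendIcc hab).stieltjesFunction.measure

variable (hab : a ≤ b) (hβ : MonotoneOn β (Icc a b))

lemma stieltjesMeasure_singleton {t : ℝ} (ht : t ∈ Icc a b) :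
    stieltjesMeasure hab hβ {t} = ENNReal.ofReal (muPt a b β t) := by
  have hq := hβ.monotone_extendIcc hab
  rw [stieltjesMeasure, StieltjesFunction.measure_singleton, muPt_eq_extendIcc hab hβ ht, muPt,
    rLim_extendIcc hab ht.2, lLim_extendIcc hab ht.1,
    ← leftLim_rightLim (hq.tendsto_leftLim t)]
  rfl

lemma stieltjesMeasure_Ioo {c d : ℝ} (hc : c ∈ Icc a b) (hd : d ∈ Icc a b) :
    stieltjesMeasure hab hβ (Ioo c d) = ENNReal.ofReal (muIoo a b β c d) := by
  have hq := hβ.monotone_extendIcc hab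
  rw [stieltjesMeasure, StieltjesFunction.measure_Ioo, muIoo_eq_extendIcc hab hβ hc hd, muIoo,
    rLim_extendIcc hab hc.2, lLim_extendIcc hab hd.1,
    ← leftLim_rightLim (hq.tendsto_leftLim d)]
  rfl

lemma integrableOn_and_setIntegral_singleton {t : ℝ} (ht : t ∈ Icc a b) (u : ℝ → ℝ) :
    IntegrableOn u {t} (stieltjesMeasure hab hβ) ∧
      ∫ s in {t}, u s ∂stieltjesMeasure hab hβ = u t * muPt a b β t := by
  have hμ := stieltjesMeasure_singleton hab hβ ht
  refine ⟨integrableOn_singleton (hx := by rw [hμ]; exact ENNReal.ofReal_lt_top), ?_⟩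
  rw [integral_singleton, measureReal_def, hμ, ENNReal.toReal_ofReal (muPt_nonneg hβ ht),
    smul_eq_mul, mul_comm]

lemma integrableOn_and_setIntegral_Ioo {c d y : ℝ} (hc : c ∈ Icc a b) (hd : d ∈ Icc a b)
    (hcd : c < d) (hu : ∀ s ∈ Ioo c d, u s = y) :
    IntegrableOn u (Ioo c d) (stieltjesMeasure hab hβ) ∧
      ∫ s in Ioo c d, u s ∂stieltjesMeasure hab hβ = y * muIoo a b β c d := by
  have hμ := stieltjesMeasure_Ioo hab hβ hc hd
  have hconst : EqOn (fun _ => y) u (Ioo c d) := fun s hs => (hu s hs).symm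
  refine ⟨(integrableOn_const (by rw [hμ]; exact ENNReal.ofReal_ne_top)).congr_fun hconst
    measurableSet_Ioo, ?_⟩
  rw [← setIntegral_congr_fun measurableSet_Ioo hconst, setIntegral_const, measureReal_def, hμ,
    ENNReal.toReal_ofReal (muIoo_nonneg hβ hc hd hcd), smul_eq_mul, mul_comm]

lemma integrableOn_and_setIntegral_eq_stepInt {P : RDSPartition a b} (hu : IsStepOn a b u P) :
    IntegrableOn u (Icc a b) (stieltjesMeasure hab hβ) ∧
      ∫ t in Icc a b, u t ∂stieltjesMeasure hab hβ = stepInt a b β P u := by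
  have hpartial : ∀ k ≤ P.n, IntegrableOn u (Icc a (P.x k)) (stieltjesMeasure hab hβ) ∧
      ∫ t in Icc a (P.x k), u t ∂stieltjesMeasure hab hβ =
        (∑ i ∈ Finset.range (k + 1), u (P.x i) * muPt a b β (P.x i)) +
          ∑ i ∈ Finset.range k,
            u ((P.x i + P.x (i + 1)) / 2) * muIoo a b β (P.x i) (P.x (i + 1)) := by
    intro k hk
    induction k with
    | zero =>
      simpa [P.first] using integrableOn_and_setIntegral_singleton hab hβ (P.x_mem hk) u
    | succ k ih =>
      obtain ⟨ihi, ihv⟩ := ih (by omega)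
      have hxk := P.mono k (by omega)
      obtain ⟨hoi, hov⟩ := integrableOn_and_setIntegral_Ioo hab hβ (P.x_mem (by omega))
        (P.x_mem hk) hxk (hu k (by omega))
      obtain ⟨hsi, hsv⟩ := integrableOn_and_setIntegral_singleton hab hβ (P.x_mem hk) u
      have hd₁ : Disjoint (Icc a (P.x k)) (Ioo (P.x k) (P.x (k + 1)) ∪ {P.x (k + 1)}) :=
        disjoint_left.2 fun t h₁ h₂ => by
          rcases h₂ with h₂ | rfl
          exacts [h₂.1.not_ge h₁.2, hxk.not_ge h₁.2]
      have hd₂ : Disjoint (Ioo (P.x k) (P.x (k + 1))) {P.x (k + 1)} := by simp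
      rw [← Icc_union_Ioc_eq_Icc (P.x_mem (by omega)).1 hxk.le, ← Ioo_union_right hxk,
        setIntegral_union hd₁ (measurableSet_Ioo.union (measurableSet_singleton _)) ihi
          (hoi.union hsi), setIntegral_union hd₂ (measurableSet_singleton _) hoi hsi, ihv, hov,
        hsv]
      refine ⟨ihi.union (hoi.union hsi), ?_⟩
      simp only [Finset.sum_range_succ]
      ring
  obtain ⟨hint, heq⟩ := hpartial P.n le_rfl
  rw [P.last] at hint heq
  exact ⟨hint, heq⟩

end Stieltjes

section StepIntegralComparison

variable {a b : ℝ} {β u v : ℝ → ℝ} {P Q : RDSPartition a b}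

lemma stepInt_le_stepInt (hβ : MonotoneOn β (Icc a b)) (hu : IsStepOn a b u P)
    (hv : IsStepOn a b v Q) (huv : ∀ t ∈ Icc a b, u t ≤ v t) :
    stepInt a b β P u ≤ stepInt a b β Q v := by
  obtain ⟨hui, hu_eq⟩ := integrableOn_and_setIntegral_eq_stepInt P.left_le_right hβ hu
  obtain ⟨hvi, hv_eq⟩ := integrableOn_and_setIntegral_eq_stepInt P.left_le_right hβ hv
  rw [← hu_eq, ← hv_eq]
  exact setIntegral_mono_on hui hvi measurableSet_Icc huv

lemma stepInt_eq_stepInt (hβ : MonotoneOn β (Icc a b)) (hP : IsStepOn a b u P)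
    (hQ : IsStepOn a b u Q) : stepInt a b β P u = stepInt a b β Q u :=
  le_antisymm (stepInt_le_stepInt hβ hP hQ fun _ _ => le_rfl)
    (stepInt_le_stepInt hβ hQ hP fun _ _ => le_rfl)

end StepIntegralComparison

structure IsBracket {a b : ℝ} (f : ℝ → ℝ) (P : RDSPartition a b) (v u : ℝ → ℝ) : Prop where
  isStepOn_lower : IsStepOn a b v P
  isStepOn_upper : IsStepOn a b u P
  lower_le : ∀ t ∈ Icc a b, v t ≤ f t
  le_upper : ∀ t ∈ Icc a b, f t ≤ u t

namespace IsBracket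

variable {a b : ℝ} {f u v : ℝ → ℝ} {P R : RDSPartition a b}

lemma lower_le_upper (h : IsBracket f P v u) {t : ℝ} (ht : t ∈ Icc a b) : v t ≤ u t :=
  (h.lower_le t ht).trans (h.le_upper t ht)

lemma of_refinement (h : IsBracket f P v u) (hPR : ∀ w, IsStepOn a b w P → IsStepOn a b w R) :
    IsBracket f R v u :=
  ⟨hPR v h.isStepOn_lower, hPR u h.isStepOn_upper, h.lower_le, h.le_upper⟩

lemma abs (h : IsBracket f P v u) :
    IsBracket (fun t => |f t|) P (fun t => max (v t) (-u t)) (fun t => max (u t) (-v t)) where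
  isStepOn_lower := h.isStepOn_lower.map₂ h.isStepOn_upper fun x y => max x (-y)
  isStepOn_upper := h.isStepOn_upper.map₂ h.isStepOn_lower fun x y => max x (-y)
  lower_le t ht := max_le ((h.lower_le t ht).trans (le_abs_self _))
    (neg_le.2 ((neg_abs_le _).trans (h.le_upper t ht)))
  le_upper t ht := abs_le.2 ⟨neg_le.1 ((neg_le_neg (h.lower_le t ht)).trans (le_max_right _ _)),
    (h.le_upper t ht).trans (le_max_left _ _)⟩

end IsBracket

lemma max_neg_sub_max_neg_le (x y : ℝ) : max x (-y) - max y (-x) ≤ x - y := by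
  have := le_max_left y (-x)
  have := le_max_right y (-x)
  have : max x (-y) ≤ x - y + max y (-x) := max_le (by linarith) (by linarith)
  linarith

section Envelopes

variable {a b : ℝ} {β γ δ f u v : ℝ → ℝ} {P : RDSPartition a b}

lemma upperRDS_le_stepInt (hβ : MonotoneOn β (Icc a b)) (hf : BddOn a b f)
    (hu : IsStepOn a b u P) (hfu : ∀ t ∈ Icc a b, f t ≤ u t) :
    upperRDS a b β f ≤ stepInt a b β P u := by
  obtain ⟨M, hM⟩ := hf
  refine csInf_le ⟨stepInt a b β P fun _ => -M, ?_⟩ ⟨u, P, hu, hfu, rfl⟩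
  rintro _ ⟨w, Q, hw, hfw, rfl⟩
  exact stepInt_le_stepInt hβ (IsStepOn.const _ P) hw fun t ht =>
    (neg_le_of_abs_le (hM t ht)).trans (hfw t ht)

lemma stepInt_le_lowerRDS (hβ : MonotoneOn β (Icc a b)) (hf : BddOn a b f)
    (hv : IsStepOn a b v P) (hvf : ∀ t ∈ Icc a b, v t ≤ f t) :
    stepInt a b β P v ≤ lowerRDS a b β f := by
  obtain ⟨M, hM⟩ := hf
  refine le_csSup ⟨stepInt a b β P fun _ => M, ?_⟩ ⟨v, P, hv, hvf, rfl⟩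
  rintro _ ⟨w, Q, hw, hwf, rfl⟩
  exact stepInt_le_stepInt hβ hw (IsStepOn.const _ P) fun t ht =>
    (hwf t ht).trans (le_of_abs_le (hM t ht))

lemma lowerRDS_le_upperRDS (hab : a ≤ b) (hβ : MonotoneOn β (Icc a b)) (hf : BddOn a b f) :
    lowerRDS a b β f ≤ upperRDS a b β f := by
  obtain ⟨M, hM⟩ := hf
  have hlower : ∀ t ∈ Icc a b, -M ≤ f t := fun t ht => neg_le_of_abs_le (hM t ht)
  have hupper : ∀ t ∈ Icc a b, f t ≤ M := fun t ht => le_of_abs_le (hM t ht)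
  refine csSup_le ⟨_, _, _, IsStepOn.const (-M) (.endpoints hab), hlower, rfl⟩ ?_
  rintro _ ⟨v, P, hv, hvf, rfl⟩
  refine le_csInf ⟨_, _, _, IsStepOn.const M (.endpoints hab), hupper, rfl⟩ ?_
  rintro _ ⟨u, Q, hu, hfu, rfl⟩
  exact stepInt_le_stepInt hβ hv hu fun t ht => (hvf t ht).trans (hfu t ht)

lemma rdsIntegrableInc_of_forall_exists_bracket (hβ : MonotoneOn β (Icc a b)) (hf : BddOn a b f)
    (h : ∀ ε > 0, ∃ (P : RDSPartition a b) (v u : ℝ → ℝ), IsBracket f P v u ∧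
      stepInt a b β P u - stepInt a b β P v ≤ ε) :
    RDSIntegrableInc a b β f := by
  obtain ⟨P, -⟩ := h 1 one_pos
  refine le_antisymm (lowerRDS_le_upperRDS P.left_le_right hβ hf)
    (le_of_forall_pos_le_add fun ε hε => ?_)
  obtain ⟨Q, v, u, hvu, hgap⟩ := h ε hε
  linarith [upperRDS_le_stepInt hβ hf hvu.isStepOn_upper hvu.le_upper,
    stepInt_le_lowerRDS hβ hf hvu.isStepOn_lower hvu.lower_le]

lemma exists_stepInt_lt_upperRDS_add (hab : a ≤ b) (hf : BddOn a b f) {ε : ℝ} (hε : 0 < ε) :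
    ∃ (P : RDSPartition a b) (u : ℝ → ℝ), IsStepOn a b u P ∧ (∀ t ∈ Icc a b, f t ≤ u t) ∧
      stepInt a b β P u < upperRDS a b β f + ε := by
  obtain ⟨M, hM⟩ := hf
  obtain ⟨_, ⟨u, P, hu, hfu, rfl⟩, hlt⟩ := Real.lt_sInf_add_pos (s := {r | ∃ (u : ℝ → ℝ)
      (P : RDSPartition a b), IsStepOn a b u P ∧ (∀ t ∈ Icc a b, f t ≤ u t) ∧
        r = stepInt a b β P u})
    ⟨_, _, _, IsStepOn.const M (.endpoints hab), fun t ht => le_of_abs_le (hM t ht), rfl⟩ hε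
  exact ⟨P, u, hu, hfu, hlt⟩

lemma exists_lowerRDS_sub_lt_stepInt (hab : a ≤ b) (hf : BddOn a b f) {ε : ℝ} (hε : 0 < ε) :
    ∃ (P : RDSPartition a b) (v : ℝ → ℝ), IsStepOn a b v P ∧ (∀ t ∈ Icc a b, v t ≤ f t) ∧
      lowerRDS a b β f - ε < stepInt a b β P v := by
  obtain ⟨M, hM⟩ := hf
  obtain ⟨_, ⟨v, P, hv, hvf, rfl⟩, hlt⟩ := Real.add_neg_lt_sSup (s := {r | ∃ (v : ℝ → ℝ)
      (P : RDSPartition a b), IsStepOn a b v P ∧ (∀ t ∈ Icc a b, v t ≤ f t) ∧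
        r = stepInt a b β P v})
    ⟨_, _, _, IsStepOn.const (-M) (.endpoints hab), fun t ht => neg_le_of_abs_le (hM t ht), rfl⟩
    (neg_neg_of_pos hε)
  exact ⟨P, v, hv, hvf, by rwa [← sub_eq_add_neg] at hlt⟩

lemma RDSIntegrableInc.exists_bracket (hab : a ≤ b) (hβ : MonotoneOn β (Icc a b))
    (hf : BddOn a b f) (h : RDSIntegrableInc a b β f) {ε : ℝ} (hε : 0 < ε) :
    ∃ (P : RDSPartition a b) (v u : ℝ → ℝ), IsBracket f P v u ∧
      stepInt a b β P u - stepInt a b β P v ≤ ε := by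
  obtain ⟨P, u, hu, hfu, hPu⟩ := exists_stepInt_lt_upperRDS_add (β := β) hab hf (half_pos hε)
  obtain ⟨Q, v, hv, hvf, hQv⟩ := exists_lowerRDS_sub_lt_stepInt (β := β) hab hf (half_pos hε)
  obtain ⟨R, hPR, hQR⟩ := P.exists_common_refinement Q
  refine ⟨R, v, u, ⟨hQR v hv, hPR u hu, hvf, hfu⟩, ?_⟩
  rw [← stepInt_eq_stepInt hβ hu (hPR u hu), ← stepInt_eq_stepInt hβ hv (hQR v hv)]
  rw [RDSIntegrableInc] at h
  linarith

lemma exists_common_bracket (hab : a ≤ b) (hβ : MonotoneOn β (Icc a b))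
    (hγ : MonotoneOn γ (Icc a b)) (hf : BddOn a b f) (hβi : RDSIntegrableInc a b β f)
    (hγi : RDSIntegrableInc a b γ f) {ε : ℝ} (hε : 0 < ε) :
    ∃ (P : RDSPartition a b) (v u : ℝ → ℝ), IsBracket f P v u ∧
      stepInt a b β P u - stepInt a b β P v ≤ ε ∧ stepInt a b γ P u - stepInt a b γ P v ≤ ε := by
  obtain ⟨P₁, v₁, u₁, h₁, hgap₁⟩ := hβi.exists_bracket hab hβ hf hε
  obtain ⟨P₂, v₂, u₂, h₂, hgap₂⟩ := hγi.exists_bracket hab hγ hf hε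
  obtain ⟨R, hP₁R, hP₂R⟩ := P₁.exists_common_refinement P₂
  have h₁R := h₁.of_refinement hP₁R
  have h₂R := h₂.of_refinement hP₂R
  have hR : IsBracket f R (fun t => max (v₁ t) (v₂ t)) (fun t => min (u₁ t) (u₂ t)) :=
    ⟨h₁R.isStepOn_lower.map₂ h₂R.isStepOn_lower max, h₁R.isStepOn_upper.map₂ h₂R.isStepOn_upper min,
      fun t ht => max_le (h₁.lower_le t ht) (h₂.lower_le t ht),
      fun t ht => le_min (h₁.le_upper t ht) (h₂.le_upper t ht)⟩
  refine ⟨R, _, _, hR, ?_, ?_⟩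
  · rw [stepInt_eq_stepInt hβ h₁.isStepOn_upper h₁R.isStepOn_upper,
      stepInt_eq_stepInt hβ h₁.isStepOn_lower h₁R.isStepOn_lower, ← stepInt_sub] at hgap₁
    rw [← stepInt_sub]
    refine (stepInt_mono hβ R fun t _ => ?_).trans hgap₁
    linarith [min_le_left (u₁ t) (u₂ t), le_max_left (v₁ t) (v₂ t)]
  · rw [stepInt_eq_stepInt hγ h₂.isStepOn_upper h₂R.isStepOn_upper,
      stepInt_eq_stepInt hγ h₂.isStepOn_lower h₂R.isStepOn_lower, ← stepInt_sub] at hgap₂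
    rw [← stepInt_sub]
    refine (stepInt_mono hγ R fun t _ => ?_).trans hgap₂
    linarith [min_le_right (u₁ t) (u₂ t), le_max_right (v₁ t) (v₂ t)]

end Envelopes

section Integrability

variable {a b : ℝ} {β γ δ f : ℝ → ℝ}

lemma BddOn.abs (hf : BddOn a b f) : BddOn a b fun t => |f t| :=
  let ⟨M, hM⟩ := hf
  ⟨M, fun t ht => (abs_abs (f t)).trans_le (hM t ht)⟩

lemma RDSIntegrableInc.abs (hab : a ≤ b) (hβ : MonotoneOn β (Icc a b)) (hf : BddOn a b f)
    (h : RDSIntegrableInc a b β f) : RDSIntegrableInc a b β fun t => |f t| := by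
  refine rdsIntegrableInc_of_forall_exists_bracket hβ hf.abs fun ε hε => ?_
  obtain ⟨P, v, u, hvu, hgap⟩ := h.exists_bracket hab hβ hf hε
  refine ⟨P, _, _, hvu.abs, ?_⟩
  rw [← stepInt_sub] at hgap ⊢
  exact (stepInt_mono hβ P fun t _ => max_neg_sub_max_neg_le (u t) (v t)).trans hgap

lemma RDSIntegrableInc.of_monotoneOn_sub (hab : a ≤ b) (hβ : MonotoneOn β (Icc a b))
    (hγ : MonotoneOn γ (Icc a b)) (hγβ : MonotoneOn (γ - β) (Icc a b)) (hf : BddOn a b f)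
    (h : RDSIntegrableInc a b γ f) : RDSIntegrableInc a b β f := by
  refine rdsIntegrableInc_of_forall_exists_bracket hβ hf fun ε hε => ?_
  obtain ⟨P, v, u, hvu, hgap⟩ := h.exists_bracket hab hγ hf hε
  refine ⟨P, v, u, hvu, ?_⟩
  rw [← stepInt_sub] at hgap ⊢
  exact ((isMonotoneAdditive_stepInt P fun t ht => sub_nonneg.2
    (hvu.lower_le_upper ht)).mono hβ hγβ).trans hgap

lemma RDSIntegrableInc.add_integrator (hab : a ≤ b) (hβ : MonotoneOn β (Icc a b))
    (hγ : MonotoneOn γ (Icc a b)) (hf : BddOn a b f) (hβi : RDSIntegrableInc a b β f)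
    (hγi : RDSIntegrableInc a b γ f) : RDSIntegrableInc a b (β + γ) f := by
  refine rdsIntegrableInc_of_forall_exists_bracket (hβ.add hγ) hf fun ε hε => ?_
  obtain ⟨P, v, u, hvu, hβgap, hγgap⟩ := exists_common_bracket hab hβ hγ hf hβi hγi (half_pos hε)
  refine ⟨P, v, u, hvu, ?_⟩
  rw [stepInt_add_integrator hβ hγ, stepInt_add_integrator hβ hγ]
  linarith

lemma upperRDS_add_integrator (hab : a ≤ b) (hβ : MonotoneOn β (Icc a b))
    (hγ : MonotoneOn γ (Icc a b)) (hf : BddOn a b f) (hβi : RDSIntegrableInc a b β f)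
    (hγi : RDSIntegrableInc a b γ f) :
    upperRDS a b (β + γ) f = upperRDS a b β f + upperRDS a b γ f := by
  have hβγ : MonotoneOn (β + γ) (Icc a b) := hβ.add hγ
  suffices ∀ ε > 0, |upperRDS a b (β + γ) f - (upperRDS a b β f + upperRDS a b γ f)| ≤ 2 * ε by
    refine eq_of_abs_sub_nonpos (le_of_forall_pos_le_add fun ε hε => ?_)
    linarith [this (ε / 2) (half_pos hε)]
  intro ε hε
  obtain ⟨P, v, u, hvu, hβgap, hγgap⟩ := exists_common_bracket hab hβ hγ hf hβi hγi hε
  have hsum_u := upperRDS_le_stepInt hβγ hf hvu.isStepOn_upper hvu.le_upper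
  have hsum_v := (stepInt_le_lowerRDS hβγ hf hvu.isStepOn_lower hvu.lower_le).trans
    (lowerRDS_le_upperRDS hab hβγ hf)
  rw [stepInt_add_integrator hβ hγ] at hsum_u hsum_v
  have hβu := upperRDS_le_stepInt hβ hf hvu.isStepOn_upper hvu.le_upper
  have hγu := upperRDS_le_stepInt hγ hf hvu.isStepOn_upper hvu.le_upper
  have hβv := hβi ▸ stepInt_le_lowerRDS hβ hf hvu.isStepOn_lower hvu.lower_le
  have hγv := hγi ▸ stepInt_le_lowerRDS hγ hf hvu.isStepOn_lower hvu.lower_le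
  exact abs_le.2 ⟨by linarith, by linarith⟩

lemma upperRDS_congr_integrator (hβ : MonotoneOn β (Icc a b)) (h : EqOn β γ (Icc a b))
    (f : ℝ → ℝ) : upperRDS a b β f = upperRDS a b γ f := by
  simp only [upperRDS, stepInt_congr_integrator hβ h]

lemma upperRDS_zero_integrator (f : ℝ → ℝ) : upperRDS a b 0 f = 0 := by
  have : {r | ∃ (u : ℝ → ℝ) (P : RDSPartition a b), IsStepOn a b u P ∧
      (∀ t ∈ Icc a b, f t ≤ u t) ∧ r = stepInt a b 0 P u} ⊆ {0} := by
    rintro _ ⟨u, P, -, -, rfl⟩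
    exact stepInt_zero_integrator P u
  rcases subset_singleton_iff_eq.1 this with h | h <;> rw [upperRDS, h] <;> simp

lemma lowerRDS_zero_integrator (f : ℝ → ℝ) : lowerRDS a b 0 f = 0 := by
  have : {r | ∃ (v : ℝ → ℝ) (P : RDSPartition a b), IsStepOn a b v P ∧
      (∀ t ∈ Icc a b, v t ≤ f t) ∧ r = stepInt a b 0 P v} ⊆ {0} := by
    rintro _ ⟨v, P, -, -, rfl⟩
    exact stepInt_zero_integrator P v
  rcases subset_singleton_iff_eq.1 this with h | h <;> rw [lowerRDS, h] <;> simp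

lemma rdsIntegrableInc_zero_integrator (f : ℝ → ℝ) : RDSIntegrableInc a b 0 f :=
  (lowerRDS_zero_integrator f).trans (upperRDS_zero_integrator f).symm

end Integrability

section Triangle

variable {a b : ℝ} {α β γ δ p m f : ℝ → ℝ}

lemma abs_upperRDS_sub_le (hab : a ≤ b) (hβ : MonotoneOn β (Icc a b))
    (hγ : MonotoneOn γ (Icc a b)) (hδ : MonotoneOn δ (Icc a b))
    (h₁ : MonotoneOn (δ - (β - γ)) (Icc a b)) (h₂ : MonotoneOn (δ + (β - γ)) (Icc a b))
    (h₃ : MonotoneOn (β + γ - δ) (Icc a b)) (hf : BddOn a b f) (hβi : RDSIntegrableInc a b β f)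
    (hγi : RDSIntegrableInc a b γ f) :
    |upperRDS a b β f - upperRDS a b γ f| ≤ upperRDS a b δ fun t => |f t| := by
  refine le_of_forall_pos_le_add fun ε hε => ?_
  obtain ⟨P, v, u, hvu, hβgap, hγgap⟩ :=
    exists_common_bracket hab hβ hγ hf hβi hγi (div_pos hε three_pos)
  have habs := hvu.abs
  have hsigned : |stepInt a b β P v - stepInt a b γ P v| ≤
      stepInt a b δ P fun t => max (u t) (-v t) :=
    abs_stepInt_sub_le hβ hγ hδ h₁ h₂ P fun t ht =>
      abs_le.2 ⟨neg_le.1 (le_max_right _ _), (hvu.lower_le_upper ht).trans (le_max_left _ _)⟩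
  have hgap : (stepInt a b δ P fun t => max (u t) (-v t)) -
      (stepInt a b δ P fun t => max (v t) (-u t)) ≤
      stepInt a b β P u - stepInt a b β P v + (stepInt a b γ P u - stepInt a b γ P v) := by
    rw [← stepInt_sub, ← stepInt_sub, ← stepInt_sub, ← stepInt_add_integrator hβ hγ]
    exact (stepInt_mono hδ P fun t _ => max_neg_sub_max_neg_le _ _).trans
      ((isMonotoneAdditive_stepInt P fun t ht => sub_nonneg.2 (hvu.lower_le_upper ht)).mono
        hδ h₃)
  have hlow : (stepInt a b δ P fun t => max (v t) (-u t)) ≤ upperRDS a b δ fun t => |f t| :=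
    (stepInt_le_lowerRDS hδ hf.abs habs.isStepOn_lower habs.lower_le).trans
      (lowerRDS_le_upperRDS hab hδ hf.abs)
  have hβu := upperRDS_le_stepInt hβ hf hvu.isStepOn_upper hvu.le_upper
  have hγu := upperRDS_le_stepInt hγ hf hvu.isStepOn_upper hvu.le_upper
  have hβv := hβi ▸ stepInt_le_lowerRDS hβ hf hvu.isStepOn_lower hvu.lower_le
  have hγv := hγi ▸ stepInt_le_lowerRDS hγ hf hvu.isStepOn_lower hvu.lower_le
  rw [abs_le] at hsigned ⊢
  constructor <;> linarith [hsigned.1, hsigned.2]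

lemma RDSIntegral_eq_upperRDS_sub (hab : a ≤ b) (hf : BddOn a b f) (hp : MonotoneOn p (Icc a b))
    (hm : MonotoneOn m (Icc a b)) (hα : ∀ t ∈ Icc a b, α t = p t - m t)
    (hpi : RDSIntegrableInc a b p f) (hmi : RDSIntegrableInc a b m f) :
    RDSIntegral a b α f = upperRDS a b p f - upperRDS a b m f := by
  have h : RDSIntegrable a b α f := ⟨p, m, hp, hm, hα, hpi, hmi⟩
  obtain ⟨hp', hm', hα', hpi', hmi'⟩ := h.choose_spec.choose_spec
  rw [RDSIntegral, dif_pos h, RDSIntegralInc, RDSIntegralInc]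
  have hsum : EqOn (h.choose + m) (p + h.choose_spec.choose) (Icc a b) := fun t ht => by
    simp only [Pi.add_apply]
    linarith [hα t ht, hα' t ht]
  have := upperRDS_congr_integrator (β := h.choose + m) (hp'.add hm) hsum f
  rw [upperRDS_add_integrator hab hp' hm hf hpi' hmi,
    upperRDS_add_integrator hab hp hm' hf hpi hmi'] at this
  linarith

lemma RDSIntegrable.of_monotoneOn (hβ : MonotoneOn β (Icc a b))
    (h : RDSIntegrableInc a b β f) : RDSIntegrable a b β f :=
  ⟨β, 0, hβ, monotoneOn_const, fun t _ => (sub_zero (β t)).symm, h,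
    rdsIntegrableInc_zero_integrator f⟩

lemma RDSIntegral_eq_upperRDS (hab : a ≤ b) (hβ : MonotoneOn β (Icc a b)) (hf : BddOn a b f)
    (h : RDSIntegrableInc a b β f) : RDSIntegral a b β f = upperRDS a b β f := by
  rw [RDSIntegral_eq_upperRDS_sub (m := 0) hab hf hβ monotoneOn_const
    (fun t _ => (sub_zero (β t)).symm) h (rdsIntegrableInc_zero_integrator f),
    upperRDS_zero_integrator, sub_zero]

end Triangle

lemma eVariationOn_sub_le {ι E : Type*} [LinearOrder ι] [SeminormedAddCommGroup E]
    (f g : ι → E) (s : Set ι) : eVariationOn (f - g) s ≤ eVariationOn f s + eVariationOn g s := by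
  refine iSup_le fun ⟨n, u, hu, us⟩ => ?_
  calc ∑ i ∈ Finset.range n, edist ((f - g) (u (i + 1))) ((f - g) (u i))
      ≤ ∑ i ∈ Finset.range n,
          (edist (f (u (i + 1))) (f (u i)) + edist (g (u (i + 1))) (g (u i))) :=
        Finset.sum_le_sum fun i _ => by
          simp only [Pi.sub_apply, sub_eq_add_neg]
          exact (edist_add_add_le _ _ _ _).trans_eq (by rw [edist_neg_neg])
    _ ≤ eVariationOn f s + eVariationOn g s := by
      rw [Finset.sum_add_distrib]
      exact add_le_add (eVariationOn.sum_le (f := f) hu us) (eVariationOn.sum_le (f := g) hu us)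

noncomputable def variationFrom (a : ℝ) (α : ℝ → ℝ) (t : ℝ) : ℝ :=
  (eVariationOn α (Icc a t)).toReal

section Variation

variable {a b : ℝ} {α p m : ℝ → ℝ}

lemma eqOn_variationFrom_variationOnFromTo :
    EqOn (variationFrom a α) (variationOnFromTo α (Icc a b) a) (Icc a b) := fun t ht => by
  rw [variationFrom, variationOnFromTo.eq_of_le _ _ ht.1, Icc_inter_Icc, max_self,
    min_eq_right ht.2]

variable (hab : a ≤ b) (hα : BoundedVariationOn α (Icc a b))
include hab hα

lemma monotoneOn_variationFrom : MonotoneOn (variationFrom a α) (Icc a b) :=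
  (variationOnFromTo.monotoneOn hα.locallyBoundedVariationOn (left_mem_Icc.2 hab)).congr
    eqOn_variationFrom_variationOnFromTo.symm

lemma monotoneOn_variationFrom_sub : MonotoneOn (variationFrom a α - α) (Icc a b) :=
  (variationOnFromTo.sub_self_monotoneOn hα.locallyBoundedVariationOn (left_mem_Icc.2 hab)).congr
    fun t ht => by simp only [Pi.sub_apply, eqOn_variationFrom_variationOnFromTo ht]

lemma monotoneOn_variationFrom_add : MonotoneOn (variationFrom a α + α) (Icc a b) :=
  (variationOnFromTo.add_self_monotoneOn hα.locallyBoundedVariationOn (left_mem_Icc.2 hab)).congr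
    fun t ht => by simp only [Pi.add_apply, eqOn_variationFrom_variationOnFromTo ht]

omit hab in
lemma monotoneOn_add_sub_variationFrom (hp : MonotoneOn p (Icc a b))
    (hm : MonotoneOn m (Icc a b)) (hdec : ∀ t ∈ Icc a b, α t = p t - m t) :
    MonotoneOn (p + m - variationFrom a α) (Icc a b) := by
  intro s hs t ht hst
  have hsub : Icc s t ⊆ Icc a b := Icc_subset_Icc hs.1 ht.2
  have hvar : variationFrom a α t - variationFrom a α s ≤ (p t - p s) + (m t - m s) := by
    rw [eqOn_variationFrom_variationOnFromTo ht, eqOn_variationFrom_variationOnFromTo hs,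
      variationOnFromTo.sub_right hα.locallyBoundedVariationOn (left_mem_Icc.2 (hs.1.trans hs.2))
        ht hs, variationOnFromTo.eq_of_le _ _ hst, inter_eq_right.2 hsub,
      eVariationOn.eq_of_eqOn fun x hx => hdec x (hsub hx)]
    have hp' := hp.eVariationOn_eq hs ht
    have hm' := hm.eVariationOn_eq hs ht
    rw [inter_eq_right.2 hsub] at hp' hm'
    calc (eVariationOn (p - m) (Icc s t)).toReal
        ≤ (ENNReal.ofReal (p t - p s) + ENNReal.ofReal (m t - m s)).toReal :=
          ENNReal.toReal_mono (by finiteness)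
            ((eVariationOn_sub_le p m _).trans (add_le_add hp'.le hm'.le))
      _ = (p t - p s) + (m t - m s) := by
          rw [ENNReal.toReal_add (by finiteness) (by finiteness),
            ENNReal.toReal_ofReal (sub_nonneg.2 (hp hs ht hst)),
            ENNReal.toReal_ofReal (sub_nonneg.2 (hm hs ht hst))]
  simp only [Pi.add_apply, Pi.sub_apply]
  linarith

end Variation

lemma triangle_inequality_of_bddOn {a b : ℝ} {α f : ℝ → ℝ} (hab : a ≤ b)
    (hα : BoundedVariationOn α (Icc a b)) (hf : BddOn a b f) (h : RDSIntegrable a b α f) :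
    RDSIntegrable a b α (fun t => |f t|) ∧ RDSIntegrable a b (variationFrom a α) f ∧
      |RDSIntegral a b α f| ≤ RDSIntegral a b (variationFrom a α) fun t => |f t| := by
  obtain ⟨p, m, hp, hm, hdec, hpi, hmi⟩ := h
  have hV := monotoneOn_variationFrom hab hα
  have hVpm := monotoneOn_add_sub_variationFrom hα hp hm hdec
  have hVi : RDSIntegrableInc a b (variationFrom a α) f :=
    (hpi.add_integrator hab hp hm hf hmi).of_monotoneOn_sub hab hV (hp.add hm) hVpm hf
  have hpm : EqOn α (p - m) (Icc a b) := hdec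
  refine ⟨⟨p, m, hp, hm, hdec, hpi.abs hab hp hf, hmi.abs hab hm hf⟩, .of_monotoneOn hV hVi, ?_⟩
  rw [RDSIntegral_eq_upperRDS_sub hab hf hp hm hdec hpi hmi,
    RDSIntegral_eq_upperRDS hab hV hf.abs (hVi.abs hab hV hf)]
  refine abs_upperRDS_sub_le hab hp hm hV ?_ ?_ hVpm hf hpi hmi
  · exact (monotoneOn_variationFrom_sub hab hα).congr fun t ht => by simp [hpm ht]
  · exact (monotoneOn_variationFrom_add hab hα).congr fun t ht => by simp [hpm ht]

section Unbounded

variable {a b : ℝ} {α β f : ℝ → ℝ}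

lemma bddOn_iff : BddOn a b f ↔ BddAbove (f '' Icc a b) ∧ BddBelow (f '' Icc a b) := by
  refine ⟨fun ⟨M, hM⟩ => ⟨⟨M, forall_mem_image.2 fun t ht => le_of_abs_le (hM t ht)⟩,
    ⟨-M, forall_mem_image.2 fun t ht => neg_le_of_abs_le (hM t ht)⟩⟩, ?_⟩
  rintro ⟨⟨M, hM⟩, ⟨L, hL⟩⟩
  refine ⟨max M (-L), fun t ht => abs_le.2 ⟨?_, (hM (mem_image_of_mem f ht)).trans
    (le_max_left _ _)⟩⟩
  linarith [hL (mem_image_of_mem f ht), le_max_right M (-L)]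

lemma upperRDS_of_not_bddAbove (hf : ¬BddAbove (f '' Icc a b)) : upperRDS a b β f = 0 := by
  unfold upperRDS
  convert Real.sInf_empty using 2
  refine eq_empty_of_forall_notMem ?_
  rintro _ ⟨u, P, hu, hfu, rfl⟩
  obtain ⟨M, hM⟩ := hu.exists_abs_le
  exact hf ⟨M, forall_mem_image.2 fun t ht => (hfu t ht).trans (le_of_abs_le (hM t ht))⟩

lemma lowerRDS_of_not_bddBelow (hf : ¬BddBelow (f '' Icc a b)) : lowerRDS a b β f = 0 := by
  unfold lowerRDS
  convert Real.sSup_empty using 2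
  refine eq_empty_of_forall_notMem ?_
  rintro _ ⟨v, P, hv, hvf, rfl⟩
  obtain ⟨M, hM⟩ := hv.exists_abs_le
  exact hf ⟨-M, forall_mem_image.2 fun t ht => (neg_le_of_abs_le (hM t ht)).trans (hvf t ht)⟩

lemma upperRDS_neg (β f : ℝ → ℝ) :
    upperRDS a b β (fun t => -f t) = -lowerRDS a b β f := by
  rw [upperRDS, lowerRDS, Real.sInf_def]
  congr 2
  ext r
  simp only [Set.mem_neg, mem_ofPred_eq]
  constructor
  · rintro ⟨u, P, hu, hfu, hr⟩
    exact ⟨fun t => -u t, P, hu.comp Neg.neg, fun t ht => neg_le.1 (hfu t ht), by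
      rw [stepInt_neg, ← hr, neg_neg]⟩
  · rintro ⟨v, P, hv, hvf, rfl⟩
    exact ⟨fun t => -v t, P, hv.comp Neg.neg, fun t ht => neg_le_neg (hvf t ht), by
      rw [stepInt_neg]⟩

noncomputable def jumpFunction (t : ℕ → ℝ) (x : ℝ) : ℝ :=
  ∑' n, if t n < x then (2⁻¹ : ℝ) ^ n else 0

lemma summable_jumpFunction (t : ℕ → ℝ) (x : ℝ) :
    Summable fun n => if t n < x then (2⁻¹ : ℝ) ^ n else 0 :=
  (summable_geometric_of_lt_one (r := (2⁻¹ : ℝ)) (by norm_num) (by norm_num)).of_nonneg_of_le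
    (fun n => by split_ifs <;> positivity) (fun n => by split_ifs <;> [exact le_rfl; positivity])

lemma jumpFunction_term_mono (t : ℕ → ℝ) (k : ℕ) {x y : ℝ} (hxy : x ≤ y) :
    (if t k < x then (2⁻¹ : ℝ) ^ k else 0) ≤ if t k < y then (2⁻¹ : ℝ) ^ k else 0 := by
  by_cases h : t k < x
  · rw [if_pos h, if_pos (h.trans_le hxy)]
  · rw [if_neg h]
    split_ifs <;> positivity

lemma monotone_jumpFunction (t : ℕ → ℝ) : Monotone (jumpFunction t) := fun x y hxy =>
  (summable_jumpFunction t x).tsum_le_tsum (fun k => jumpFunction_term_mono t k hxy)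
    (summable_jumpFunction t y)

lemma jumpFunction_add_le {t : ℕ → ℝ} {n : ℕ} {x y : ℝ} (hx : x ≤ t n) (hy : t n < y) :
    jumpFunction t x + (2⁻¹ : ℝ) ^ n ≤ jumpFunction t y := by
  have hterm := ((summable_jumpFunction t y).sub (summable_jumpFunction t x)).le_tsum n
    fun k _ => sub_nonneg.2 (jumpFunction_term_mono t k (hx.trans hy.le))
  rw [Summable.tsum_sub (summable_jumpFunction t y) (summable_jumpFunction t x), if_pos hy,
    if_neg (not_lt.2 hx), sub_zero] at hterm
  rw [jumpFunction, jumpFunction]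
  linarith

lemma le_muPt_jumpFunction {t : ℕ → ℝ} {n : ℕ} (ht : t n ∈ Ioo a b) :
    (2⁻¹ : ℝ) ^ n ≤ muPt a b (jumpFunction t) (t n) := by
  have hJ := monotone_jumpFunction t
  rw [muPt, rLim, lLim, if_pos ht.2, if_pos ht.1]
  have h₁ : jumpFunction t (t n) + (2⁻¹ : ℝ) ^ n ≤ Function.rightLim (jumpFunction t) (t n) :=
    ge_of_tendsto (hJ.tendsto_rightLim (t n))
      (eventually_nhdsWithin_of_forall fun y hy => jumpFunction_add_le le_rfl hy)
  linarith [hJ.leftLim_le (le_refl (t n))]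


/-- The lower step integrals are unbounded, and `sSup` of an unbounded set is the junk value `0`. -/
lemma lowerRDS_eq_zero_of_jumps (hβ : MonotoneOn β (Icc a b)) {t : ℕ → ℝ}
    (ht : ∀ n, t n ∈ Icc a b) (hjump : ∀ n, (2⁻¹ : ℝ) ^ n ≤ muPt a b β (t n))
    (hpeak : ∀ n, (4 : ℝ) ^ n ≤ f (t n)) (hf : BddBelow (f '' Icc a b)) :
    lowerRDS a b β f = 0 := by
  obtain ⟨L₀, hL₀⟩ := hf
  set L := min L₀ 0
  have hL : ∀ s ∈ Icc a b, L ≤ f s := fun s hs =>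
    (min_le_left _ _).trans (hL₀ (mem_image_of_mem f hs))
  have hab : a ≤ b := (ht 0).1.trans (ht 0).2
  set C := stepInt a b β (.endpoints hab) fun _ => L
  refine Real.sSup_of_not_bddAbove fun ⟨c, hc⟩ => ?_
  suffices ∀ N : ℕ, C + 2 ^ N ≤ c by
    obtain ⟨N, hN⟩ := pow_unbounded_of_one_lt (c - C) one_lt_two
    linarith [this N]
  intro N
  have hs : ∀ x ∈ ({a, t N, b} : Finset ℝ), x ∈ Icc a b := by
    simp only [Finset.mem_insert, Finset.mem_singleton]
    rintro x (rfl | rfl | rfl)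
    exacts [left_mem_Icc.2 hab, ht N, right_mem_Icc.2 hab]
  set P := RDSPartition.ofFinset {a, t N, b} (by simp) (by simp) hs
  obtain ⟨i, hi, hPi⟩ := RDSPartition.exists_ofFinset_x_eq (by simp) (by simp) hs
    (show t N ∈ ({a, t N, b} : Finset ℝ) by simp)
  set v : ℝ → ℝ := fun x => if x = t N then f (t N) else L
  have hv : IsStepOn a b v P := fun k hk x hx => by
    have hne : ∀ y ∈ Ioo (P.x k) (P.x (k + 1)), y ≠ t N := fun y hy hyt =>
      P.x_notMem_Ioo hi hk (hPi.trans hyt.symm ▸ hy)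
    simp only [v, if_neg (hne x hx), if_neg (hne _ (P.mid_mem_Ioo hk))]
  have hvf : ∀ x ∈ Icc a b, v x ≤ f x := fun x hx => by
    simp only [v]
    split_ifs with h
    exacts [h ▸ le_rfl, hL x hx]
  have hvL : ∀ x ∈ Icc a b, 0 ≤ v x - L := fun x hx => sub_nonneg.2 <| by
    simp only [v]
    split_ifs
    exacts [hL _ (ht N), le_rfl]
  have hpeakN : (2 : ℝ) ^ N ≤ stepInt a b β P fun x => v x - L := by
    calc (2 : ℝ) ^ N = 4 ^ N * 2⁻¹ ^ N := by rw [← mul_pow]; norm_num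
      _ ≤ (v (P.x i) - L) * muPt a b β (P.x i) := by
          rw [hPi]
          simp only [v, if_pos rfl]
          exact mul_le_mul ((hpeak N).trans ((le_sub_self_iff _).2 (min_le_right _ _)))
            (hjump N) (by positivity) (sub_nonneg.2 (hL _ (ht N)))
      _ ≤ stepInt a b β P fun x => v x - L := (stepInt_nonneg_and_le hβ P hvL).2 i hi
  have hsplit : stepInt a b β P v = C + stepInt a b β P fun x => v x - L := by
    rw [stepInt_sub, stepInt_eq_stepInt hβ (IsStepOn.const L P) (IsStepOn.const L _)]
    ring
  linarith [hc ⟨v, P, hv, hvf, rfl⟩]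

lemma exists_jump_rdsIntegrableInc (hf : ¬BddAbove (f '' Icc a b))
    (hf' : BddBelow (f '' Icc a b)) :
    ∃ J : ℝ → ℝ, Monotone J ∧ ∀ q, MonotoneOn q (Icc a b) → RDSIntegrableInc a b (q + J) f := by
  have hpeaks : ∀ n : ℕ, ∃ s ∈ Ioo a b, (4 : ℝ) ^ n ≤ f s := by
    intro n
    by_contra! h
    refine hf ⟨max (4 ^ n) (max (f a) (f b)), forall_mem_image.2 fun s hs => ?_⟩
    rcases eq_endpoints_or_mem_Ioo_of_mem_Icc hs with rfl | rfl | hs'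
    · exact (le_max_left _ _).trans (le_max_right _ _)
    · exact (le_max_right _ _).trans (le_max_right _ _)
    · exact (h s hs').le.trans (le_max_left _ _)
  choose t ht hpeak using hpeaks
  have hJ := monotone_jumpFunction t
  refine ⟨jumpFunction t, hJ, fun q hq => ?_⟩
  have hjump : ∀ n, (2⁻¹ : ℝ) ^ n ≤ muPt a b (q + jumpFunction t) (t n) := fun n => by
    rw [muPt_add hq (hJ.monotoneOn _) (Ioo_subset_Icc_self (ht n))]
    linarith [muPt_nonneg hq (Ioo_subset_Icc_self (ht n)), le_muPt_jumpFunction (ht n)]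
  have hqJ : MonotoneOn (q + jumpFunction t) (Icc a b) := hq.add (hJ.monotoneOn _)
  rw [RDSIntegrableInc, upperRDS_of_not_bddAbove hf,
    lowerRDS_eq_zero_of_jumps hqJ (fun n => Ioo_subset_Icc_self (ht n)) hjump hpeak hf']

lemma RDSIntegrableInc.of_neg (h : RDSIntegrableInc a b β fun t => -f t) :
    RDSIntegrableInc a b β f := by
  have h₁ := upperRDS_neg (a := a) (b := b) β f
  have h₂ := upperRDS_neg (a := a) (b := b) β fun t => -f t
  simp only [neg_neg] at h₂
  rw [RDSIntegrableInc] at h ⊢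
  linarith

lemma exists_rdsIntegrableInc_of_not_bddOn (hf : ¬BddOn a b f) :
    ∃ J : ℝ → ℝ, Monotone J ∧ ∀ q, MonotoneOn q (Icc a b) → RDSIntegrableInc a b (q + J) f := by
  rw [bddOn_iff, not_and_or] at hf
  by_cases hfa : BddAbove (f '' Icc a b)
  · have hfb := hf.resolve_left (not_not.2 hfa)
    obtain ⟨J, hJ, hint⟩ := exists_jump_rdsIntegrableInc (f := fun t => -f t)
      (fun ⟨M, hM⟩ => hfb
        ⟨-M, forall_mem_image.2 fun t ht => neg_le.1 (hM (mem_image_of_mem _ ht))⟩)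
      (let ⟨M, hM⟩ := hfa
       ⟨-M, forall_mem_image.2 fun t ht => neg_le_neg (hM (mem_image_of_mem _ ht))⟩)
    exact ⟨J, hJ, fun q hq => (hint q hq).of_neg⟩
  by_cases hfb : BddBelow (f '' Icc a b)
  · exact exists_jump_rdsIntegrableInc hfa hfb
  · refine ⟨0, monotone_const, fun q _ => ?_⟩
    rw [RDSIntegrableInc, upperRDS_of_not_bddAbove hfa, lowerRDS_of_not_bddBelow hfb]

lemma RDSIntegrable.of_not_bddOn {p m : ℝ → ℝ} (hp : MonotoneOn p (Icc a b))
    (hm : MonotoneOn m (Icc a b)) (hdec : ∀ t ∈ Icc a b, α t = p t - m t) (hf : ¬BddOn a b f) :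
    RDSIntegrable a b α f := by
  obtain ⟨J, hJ, hint⟩ := exists_rdsIntegrableInc_of_not_bddOn hf
  exact ⟨p + J, m + J, hp.add (hJ.monotoneOn _), hm.add (hJ.monotoneOn _),
    fun t ht => by simp [hdec t ht], hint p hp, hint m hm⟩

lemma upperRDS_eq_zero_of_not_bddOn (h : RDSIntegrableInc a b β f) (hf : ¬BddOn a b f) :
    upperRDS a b β f = 0 := by
  rw [bddOn_iff, not_and_or] at hf
  rcases hf with hfa | hfb
  · exact upperRDS_of_not_bddAbove hfa
  · rw [← h]
    exact lowerRDS_of_not_bddBelow hfb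

lemma RDSIntegral_eq_zero_of_not_bddOn (hf : ¬BddOn a b f) : RDSIntegral a b α f = 0 := by
  rw [RDSIntegral]
  split_ifs with h
  · obtain ⟨-, -, -, hpi, hmi⟩ := h.choose_spec.choose_spec
    rw [RDSIntegralInc, RDSIntegralInc, upperRDS_eq_zero_of_not_bddOn hpi hf,
      upperRDS_eq_zero_of_not_bddOn hmi hf, sub_zero]
  · rfl

end Unbounded

theorem stmt12 (a b : ℝ) (hab : a < b) (α f : ℝ → ℝ)
    (hα : BoundedVariationOn α (Set.Icc a b)) (hf : RDSIntegrable a b α f) :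
    RDSIntegrable a b α (fun t => |f t|) ∧
    RDSIntegrable a b (fun t => (eVariationOn α (Set.Icc a t)).toReal) f ∧
    |RDSIntegral a b α f| ≤
      RDSIntegral a b (fun t => (eVariationOn α (Set.Icc a t)).toReal)
        (fun t => |f t|) := by
  by_cases hbdd : BddOn a b f
  · exact triangle_inequality_of_bddOn hab.le hα hbdd hf
  obtain ⟨p, m, hp, hm, hdec, -, -⟩ := hf
  have habs : ¬BddOn a b fun t => |f t| := fun ⟨M, hM⟩ =>
    hbdd ⟨M, fun t ht => (abs_abs (f t)).symm.trans_le (hM t ht)⟩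
  refine ⟨.of_not_bddOn hp hm hdec habs,
    .of_not_bddOn (monotoneOn_variationFrom hab.le hα) monotoneOn_const
      (fun t _ => (sub_zero _).symm) hbdd, ?_⟩
  rw [RDSIntegral_eq_zero_of_not_bddOn hbdd, RDSIntegral_eq_zero_of_not_bddOn habs, abs_zero]
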